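/- (Packing bound) Let q be a prime power and let n, k, δ be integers with 0 ≤ δ ≤ k ≤ n. Then A_q(n, 2δ+2, k) ≤ [n choose k−δ]_q / [k choose k−δ]_q. -/

import Mathlib

open Module

/-- The Gaussian binomial coefficient `[n choose k]_q`, as a real number:
`∏_{i=0}^{k-1} (q^{n-i}-1)/(q^{k-i}-1)`. -/
noncomputable def gaussBinom (q n k : ℕ) : ℝ :=
  ∏ i ∈ Finset.range k, ((q : ℝ) ^ (n - i) - 1) / ((q : ℝ) ^ (k - i) - 1)

/-- `C` is a constant dimension code in the Grassmannian `G_q(n,k)` with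
minimum subspace distance at least `d`: all its elements are `k`-dimensional
subspaces of `F^n`, and `d_S(U,V) = 2k - 2 dim(U ⊓ V) ≥ d` for distinct `U,V ∈ C`. -/
def IsGrassmannCode (F : Type) [Field F] (n k d : ℕ)
    (C : Finset (Submodule F (Fin n → F))) : Prop :=
  (∀ U ∈ C, finrank F ↥U = k) ∧
  ∀ U ∈ C, ∀ V ∈ C, U ≠ V → d ≤ 2 * k - 2 * finrank F ↥(U ⊓ V)

/-- `A_q(n,d,k)`: the maximum size of an `(n,M,d,k)_q` code. -/
noncomputable def maxCodeSize (F : Type) [Field F] (n d k : ℕ) : ℕ :=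
  sSup {M | ∃ C : Finset (Submodule F (Fin n → F)), IsGrassmannCode F n k d C ∧ C.card = M}

/-! Two distinct codewords meet in dimension less than `k - δ`, so every `(k - δ)`-dimensional
subspace of `F^n` lies in at most one codeword. Each codeword contains `[k choose k-δ]_q` such
subspaces and `F^n` contains `[n choose k-δ]_q` of them; both counts come from counting linearly
independent `(k - δ)`-tuples, grouped by the subspace they span. -/

open Submodule Finset

theorem gaussBinom_eq_zero_of_lt (q : ℕ) {m j : ℕ} (h : m < j) : gaussBinom q m j = 0 :=
  prod_eq_zero (mem_range.2 h) (by simp)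

theorem gaussBinom_pos {q : ℕ} (hq : 1 < q) {m j : ℕ} (hj : j ≤ m) : 0 < gaussBinom q m j := by
  have hq' : (1 : ℝ) < q := by exact_mod_cast hq
  refine prod_pos fun i hi => div_pos ?_ ?_ <;>
    exact sub_pos.2 (one_lt_pow₀ hq' (by have := mem_range.1 hi; omega))

theorem gaussBinom_eq_prod_div_prod {q : ℕ} (hq : q ≠ 0) {m j : ℕ} (hj : j ≤ m) :
    gaussBinom q m j =
      (∏ i ∈ range j, ((q : ℝ) ^ m - q ^ i)) / ∏ i ∈ range j, ((q : ℝ) ^ j - q ^ i) := by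
  rw [gaussBinom, ← prod_div_distrib]
  refine prod_congr rfl fun i hi => ?_
  have hij : i ≤ j := (mem_range.1 hi).le
  rw [← mul_div_mul_left _ _ (pow_ne_zero i (Nat.cast_ne_zero.2 hq) : (q : ℝ) ^ i ≠ 0)]
  congr 1 <;> rw [mul_sub, mul_one, ← pow_add, Nat.add_sub_cancel' (by omega)]

theorem natCast_prod_pow_sub_pow {q : ℕ} (hq : q ≠ 0) {m j : ℕ} (hj : j ≤ m) :
    ((∏ i : Fin j, (q ^ m - q ^ i.val) : ℕ) : ℝ) = ∏ i ∈ range j, ((q : ℝ) ^ m - q ^ i) := by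
  rw [Nat.cast_prod, Fin.prod_univ_eq_prod_range (fun i => ((q ^ m - q ^ i : ℕ) : ℝ))]
  refine prod_congr rfl fun i hi => ?_
  have him : i ≤ m := by have := mem_range.1 hi; omega
  rw [Nat.cast_sub (Nat.pow_le_pow_right (Nat.pos_of_ne_zero hq) him), Nat.cast_pow, Nat.cast_pow]

section SubspaceCount

variable {K V : Type*} [DivisionRing K] [Fintype K] [AddCommGroup V] [Module K V] [Finite V]

theorem card_linearIndependent_span_eq {j : ℕ} (W : Submodule K V) (hW : finrank K W = j) :
    Nat.card {s : Fin j → V // LinearIndependent K s ∧ span K (Set.range s) = W} =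
      ∏ i : Fin j, (Fintype.card K ^ j - Fintype.card K ^ i.val) := by
  subst hW
  rw [← card_linearIndependent le_rfl]
  refine Nat.card_congr
    { toFun := fun s => ⟨fun i => ⟨s.1 i, s.2.2.le (subset_span (Set.mem_range_self i))⟩,
        LinearIndependent.of_comp W.subtype s.2.1⟩
      invFun := fun t => ⟨W.subtype ∘ t.1, t.2.map' W.subtype W.ker_subtype, by
        rw [Set.range_comp, ← map_span, t.2.span_eq_top_of_card_eq_finrank' (by simp),
          Submodule.map_top, range_subtype]⟩
      left_inv := fun s => rfl
      right_inv := fun t => rfl }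

theorem card_finrank_eq_mul_prod {j : ℕ} (hj : j ≤ finrank K V) :
    Nat.card {W : Submodule K V // finrank K W = j} *
        ∏ i : Fin j, (Fintype.card K ^ j - Fintype.card K ^ i.val) =
      ∏ i : Fin j, (Fintype.card K ^ finrank K V - Fintype.card K ^ i.val) := by
  let e : {s : Fin j → V // LinearIndependent K s} ≃
      Σ W : {W : Submodule K V // finrank K W = j},
        {s : Fin j → V // LinearIndependent K s ∧ span K (Set.range s) = W.1} :=
    { toFun := fun s => ⟨⟨span K (Set.range s.1), by
          rw [finrank_span_eq_card s.2, Fintype.card_fin]⟩, s.1, s.2, rfl⟩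
      invFun := fun p => ⟨p.2.1, p.2.2.1⟩
      left_inv := fun s => rfl
      right_inv := fun p => Sigma.subtype_ext (Subtype.ext p.2.2.2) rfl }
  have := Fintype.ofFinite {W : Submodule K V // finrank K W = j}
  rw [← card_linearIndependent hj, Nat.card_congr e, Nat.card_sigma,
    sum_congr rfl fun W _ => card_linearIndependent_span_eq W.1 W.2, sum_const, smul_eq_mul,
    card_univ, Nat.card_eq_fintype_card]

theorem card_finrank_eq_eq_gaussBinom (j : ℕ) :
    (Nat.card {W : Submodule K V // finrank K W = j} : ℝ) =
      gaussBinom (Fintype.card K) (finrank K V) j := by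
  obtain hj | hj := le_or_gt j (finrank K V)
  · have hq : Fintype.card K ≠ 0 := Fintype.card_ne_zero
    have hq' : (1 : ℝ) < Fintype.card K := by exact_mod_cast Fintype.one_lt_card
    rw [gaussBinom_eq_prod_div_prod hq hj,
      eq_div_iff (prod_pos fun i hi => sub_pos.2 (pow_lt_pow_right₀ hq' (mem_range.1 hi))).ne',
      ← natCast_prod_pow_sub_pow hq le_rfl, ← natCast_prod_pow_sub_pow hq hj, ← Nat.cast_mul,
      card_finrank_eq_mul_prod hj]
  · rw [gaussBinom_eq_zero_of_lt _ hj, Nat.cast_eq_zero, Nat.card_eq_zero]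
    exact Or.inl ⟨fun W => (W.2 ▸ hj).not_ge (Submodule.finrank_le W.1)⟩

theorem card_finrank_eq_le_eq_gaussBinom (U : Submodule K V) (j : ℕ) :
    (Nat.card {W : Submodule K V // finrank K W = j ∧ W ≤ U} : ℝ) =
      gaussBinom (Fintype.card K) (finrank K U) j := by
  rw [← card_finrank_eq_eq_gaussBinom j, Nat.card_congr]
  exact ((Equiv.subtypeEquivRight fun W => and_comm).trans
    (Equiv.subtypeSubtypeEquivSubtypeInter (· ≤ U) fun W => finrank K W = j).symm).trans
    (Equiv.subtypeEquiv (MapSubtype.orderIso U).toEquiv fun W => by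
      rw [← finrank_map_subtype_eq U W]; rfl).symm

end SubspaceCount

theorem exists_isGrassmannCode_card_eq_maxCodeSize (F : Type) [Field F] [Finite F] (n k d : ℕ) :
    ∃ C, IsGrassmannCode F n k d C ∧ C.card = maxCodeSize F n d k := by
  have := Fintype.ofFinite (Submodule F (Fin n → F))
  have hbdd : BddAbove {M | ∃ C, IsGrassmannCode F n k d C ∧ C.card = M} :=
    ⟨Fintype.card (Submodule F (Fin n → F)), by rintro _ ⟨C, -, rfl⟩; exact C.card_le_univ⟩
  exact Nat.sSup_mem ⟨0, show ∃ C, _ from ⟨∅, by simp [IsGrassmannCode], rfl⟩⟩ hbdd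

namespace IsGrassmannCode

variable {F : Type} [Field F] {n k δ : ℕ} {C : Finset (Submodule F (Fin n → F))}

theorem eq_of_finrank_eq_of_le_of_le (hC : IsGrassmannCode F n k (2 * δ + 2) C)
    {U V W : Submodule F (Fin n → F)} (hU : U ∈ C) (hV : V ∈ C) (hW : finrank F W = k - δ)
    (hWU : W ≤ U) (hWV : W ≤ V) : U = V := by
  by_contra hne
  have hdist := hC.2 U hU V hV hne
  have hinf := Submodule.finrank_mono (le_inf hWU hWV)
  omega

theorem card_mul_gaussBinom_le [Fintype F] (hC : IsGrassmannCode F n k (2 * δ + 2) C) :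
    C.card * gaussBinom (Fintype.card F) k (k - δ) ≤ gaussBinom (Fintype.card F) n (k - δ) := by
  classical
  have := Fintype.ofFinite (Submodule F (Fin n → F))
  let t := univ.filter fun W : Submodule F (Fin n → F) => finrank F W = k - δ
  have hcard_t : (#t : ℝ) = gaussBinom (Fintype.card F) n (k - δ) := by
    have hcount := card_finrank_eq_eq_gaussBinom (K := F) (V := Fin n → F) (k - δ)
    rwa [finrank_fin_fun, Nat.card_eq_fintype_card, Fintype.card_subtype] at hcount
  have hcard_above : ∀ U ∈ C, gaussBinom (Fintype.card F) k (k - δ) ≤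
      #(t.bipartiteAbove (fun U W => W ≤ U) U) := fun U hU => by
    have hcount := card_finrank_eq_le_eq_gaussBinom U (k - δ)
    rw [hC.1 U hU, Nat.card_eq_fintype_card, Fintype.card_subtype] at hcount
    rw [← hcount, bipartiteAbove, filter_filter]
  have hcard_below : ∀ W ∈ t, (#(C.bipartiteBelow (fun U W => W ≤ U) W) : ℝ) ≤ 1 := by
    intro W hW
    refine Nat.cast_le_one.2 (card_le_one.2 fun U hU V hV => ?_)
    rw [mem_bipartiteBelow] at hU hV
    exact hC.eq_of_finrank_eq_of_le_of_le hU.1 hV.1 (mem_filter.1 hW).2 hU.2 hV.2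
  have := card_nsmul_le_card_nsmul _ hcard_above hcard_below
  rwa [nsmul_eq_mul, nsmul_one, hcard_t] at this

end IsGrassmannCode

theorem packing_bound_general (F : Type) [Field F] [Fintype F] (n k δ : ℕ) :
    (maxCodeSize F n (2 * δ + 2) k : ℝ) ≤
      gaussBinom (Fintype.card F) n (k - δ) / gaussBinom (Fintype.card F) k (k - δ) := by
  obtain ⟨C, hC, hcard⟩ := exists_isGrassmannCode_card_eq_maxCodeSize F n k (2 * δ + 2)
  rw [← hcard, le_div_iff₀ (gaussBinom_pos Fintype.one_lt_card (Nat.sub_le k δ))]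
  exact hC.card_mul_gaussBinom_le

/-- **Packing bound.** `A_q(n,2δ+2,k) ≤ [n choose k-δ]_q / [k choose k-δ]_q`. -/
theorem packing_bound (F : Type) [Field F] [Fintype F] (n k δ : ℕ)
    (hδk : δ ≤ k) (hkn : k ≤ n) :
    (maxCodeSize F n (2 * δ + 2) k : ℝ) ≤
      gaussBinom (Fintype.card F) n (k - δ) / gaussBinom (Fintype.card F) k (k - δ) :=
  packing_bound_general F n k δ
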